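/- arXiv:1009.2163 — 2 statements merged into one kernel-verified Lean document; each statement's English description precedes it below -/
import Mathlib

section
/- There is an isomorphism of ℝ-algebras between W_{D(2)} = ℝ[U,V]/(U², UV, V²) and the reduced tensor product W_D ⊗̃ W_D, i.e. the equalizer subalgebra {z ∈ W_D ⊗ W_D : p₁(z) = p₀(z)}. -/
/-!
`W_D ⊗ W_D` has basis `1, 1 ⊗ x, x ⊗ 1, x ⊗ x`. Since `ε x = 0`, both projections kill every `x ⊗ b`,
and they agree on scalars, while `p₁ (1 ⊗ x) = x` and `p₀ (1 ⊗ x) = 0`; hence the equalizer is spanned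
by `1, x ⊗ 1, x ⊗ x`. All products of `x ⊗ 1` and `x ⊗ x` vanish because `x² = 0`, so `u ↦ x ⊗ 1`,
`v ↦ x ⊗ x` defines an algebra map `W_{D(2)} → W_D ⊗ W_D`. It sends the spanning family `1, u, v`
to a linearly independent one, so it is injective, and its range is the equalizer.
-/

open TensorProduct Polynomial

noncomputable section

/-- The first projection `p₁ : A ⊗ B →ₐ[ℝ] B`, `a ⊗ b ↦ ε_A a • b`. -/
def p1 {A B : Type} [CommRing A] [CommRing B] [Algebra ℝ A] [Algebra ℝ B]
    (εA : A →ₐ[ℝ] ℝ) : (A ⊗[ℝ] B) →ₐ[ℝ] B :=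
  Algebra.TensorProduct.productMap ((Algebra.ofId ℝ B).comp εA) (AlgHom.id ℝ B)

/-- The second projection `p₀ : A ⊗ B →ₐ[ℝ] B`, `a ⊗ b ↦ (ε_A a * ε_B b) • 1`. -/
def p0 {A B : Type} [CommRing A] [CommRing B] [Algebra ℝ A] [Algebra ℝ B]
    (εA : A →ₐ[ℝ] ℝ) (εB : B →ₐ[ℝ] ℝ) : (A ⊗[ℝ] B) →ₐ[ℝ] B :=
  Algebra.TensorProduct.productMap ((Algebra.ofId ℝ B).comp εA) ((Algebra.ofId ℝ B).comp εB)

/-- The reduced tensor product `A ⊗̃ B`: the equalizer subalgebra of `p₁` and `p₀`. -/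
def redT {A B : Type} [CommRing A] [CommRing B] [Algebra ℝ A] [Algebra ℝ B]
    (εA : A →ₐ[ℝ] ℝ) (εB : B →ₐ[ℝ] ℝ) : Subalgebra ℝ (A ⊗[ℝ] B) :=
  AlgHom.equalizer (p1 εA) (p0 εA εB)

/-- The Weil algebra `W_D = ℝ[X]/(X²)`. -/
def WD : Type := Polynomial ℝ ⧸ Ideal.span {(X : Polynomial ℝ) ^ 2}

instance : CommRing WD := Ideal.Quotient.commRing _
instance : Algebra ℝ WD := Ideal.Quotient.algebra _

/-- The class of `X` in `W_D`. -/
def xD : WD := Ideal.Quotient.mk _ (X : Polynomial ℝ)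

/-- The augmentation `ε : W_D →ₐ[ℝ] ℝ`, `a + b·x ↦ a`. -/
def εD : WD →ₐ[ℝ] ℝ :=
  Ideal.Quotient.liftₐ _ (aeval (0 : ℝ)) (by
    intro a ha
    rw [Ideal.mem_span_singleton] at ha
    obtain ⟨c, rfl⟩ := ha
    simp)

/-- The ideal `(U², UV, V²)` in `ℝ[U,V]`. -/
def ID2 : Ideal (MvPolynomial (Fin 2) ℝ) :=
  Ideal.span {MvPolynomial.X 0 * MvPolynomial.X 0, MvPolynomial.X 0 * MvPolynomial.X 1,
    MvPolynomial.X 1 * MvPolynomial.X 1}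

/-- The Weil algebra `W_{D(2)} = ℝ[U,V]/(U², UV, V²)`. -/
def WD2 : Type := MvPolynomial (Fin 2) ℝ ⧸ ID2

instance : CommRing WD2 := Ideal.Quotient.commRing _
instance : Algebra ℝ WD2 := Ideal.Quotient.algebra _

section ReducedTensor

variable {A B : Type} [CommRing A] [CommRing B] [Algebra ℝ A] [Algebra ℝ B]
  (εA : A →ₐ[ℝ] ℝ) (εB : B →ₐ[ℝ] ℝ)

@[simp]
lemma p1_tmul (a : A) (b : B) : p1 εA (a ⊗ₜ[ℝ] b) = εA a • b := by
  simp [p1, Algebra.smul_def]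

@[simp]
lemma p0_tmul (a : A) (b : B) :
    p0 εA εB (a ⊗ₜ[ℝ] b) = algebraMap ℝ B (εA a * εB b) := by
  simp [p0]

lemma tmul_mem_redT {a : A} (ha : εA a = 0) (b : B) : a ⊗ₜ[ℝ] b ∈ redT εA εB := by
  simp [redT, AlgHom.mem_equalizer, ha]

lemma one_tmul_mem_redT_iff (b : B) :
    (1 : A) ⊗ₜ[ℝ] b ∈ redT εA εB ↔ b = algebraMap ℝ B (εB b) := by
  simp [redT, AlgHom.mem_equalizer]

lemma tmul_mul_tmul_eq_zero {a a' : A} (h : a * a' = 0) (b b' : B) :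
    (a ⊗ₜ[ℝ] b) * (a' ⊗ₜ[ℝ] b') = 0 := by
  simp [h]

end ReducedTensor

lemma xD_mul_self : xD * xD = 0 :=
  Ideal.Quotient.eq_zero_iff_mem.2 (Ideal.subset_span (sq X).symm)

@[simp]
lemma εD_xD : εD xD = 0 :=
  (show εD xD = aeval (0 : ℝ) X from rfl).trans (aeval_X 0)

def powerBasisWD : PowerBasis ℝ WD := AdjoinRoot.powerBasis' (monic_X_pow 2)

lemma powerBasisWD_dim : powerBasisWD.dim = 2 := natDegree_X_pow 2

def basisWD : Module.Basis (Fin 2) ℝ WD := powerBasisWD.basis.reindex (finCongr powerBasisWD_dim)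

lemma basisWD_apply (i : Fin 2) : basisWD i = xD ^ (i : ℕ) := by
  rw [basisWD, Module.Basis.reindex_apply, PowerBasis.basis_eq_pow]
  rfl

lemma xD_ne_zero : xD ≠ 0 := by
  simpa [basisWD_apply] using basisWD.ne_zero 1

/-- `Algebra.TensorProduct.one_def` does not apply here: `WD` is a plain `def`, so the
`Module ℝ WD` instance it needs is not found by unification. -/
lemma one_tmul_one_WD : (1 : WD) ⊗ₜ[ℝ] (1 : WD) = 1 := rfl

def basisWDTensor : Module.Basis (Fin 2 × Fin 2) ℝ (WD ⊗[ℝ] WD) :=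
  basisWD.tensorProduct basisWD

lemma basisWDTensor_apply (i j : Fin 2) :
    basisWDTensor (i, j) = (xD ^ (i : ℕ)) ⊗ₜ[ℝ] (xD ^ (j : ℕ)) := by
  rw [basisWDTensor, Module.Basis.tensorProduct_apply, basisWD_apply, basisWD_apply]

lemma WD_tensor_exists_eq (z : WD ⊗[ℝ] WD) : ∃ c d a b : ℝ, z = algebraMap ℝ _ c +
    d • ((1 : WD) ⊗ₜ[ℝ] xD) + a • (xD ⊗ₜ[ℝ] (1 : WD)) + b • (xD ⊗ₜ[ℝ] xD) := by
  let r := basisWDTensor.repr z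
  refine ⟨r (0, 0), r (0, 1), r (1, 0), r (1, 1), ?_⟩
  nth_rw 1 [← basisWDTensor.sum_repr z]
  simp only [Fintype.sum_prod_type, Fin.sum_univ_two, basisWDTensor_apply, Fin.val_zero,
    Fin.val_one, pow_zero, pow_one, Algebra.algebraMap_eq_smul_one]
  rw [one_tmul_one_WD]
  abel

lemma linearIndependent_one_xD_tmul :
    LinearIndependent ℝ ![(1 : WD ⊗[ℝ] WD), xD ⊗ₜ[ℝ] (1 : WD), xD ⊗ₜ[ℝ] xD] := by
  convert basisWDTensor.linearIndependent.comp ![(0, 0), (1, 0), (1, 1)] (by decide) using 1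
  ext i
  fin_cases i <;> simp [basisWDTensor_apply, one_tmul_one_WD]

def mkWD2 : MvPolynomial (Fin 2) ℝ →ₐ[ℝ] WD2 := Ideal.Quotient.mkₐ ℝ ID2

def genWD2 (i : Fin 2) : WD2 := mkWD2 (MvPolynomial.X i)

lemma X_mul_X_mem_ID2 (i j : Fin 2) : MvPolynomial.X i * MvPolynomial.X j ∈ ID2 := by
  fin_cases i <;> fin_cases j <;> apply Ideal.subset_span <;> simp [mul_comm]

lemma genWD2_mul_genWD2 (i j : Fin 2) : genWD2 i * genWD2 j = 0 :=
  (map_mul mkWD2 _ _).symm.trans (Ideal.Quotient.eq_zero_iff_mem.2 (X_mul_X_mem_ID2 i j))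

lemma WD2_exists_eq (w : WD2) :
    ∃ c a b : ℝ, w = algebraMap ℝ WD2 c + a • genWD2 0 + b • genWD2 1 := by
  obtain ⟨p, rfl⟩ := Ideal.Quotient.mkₐ_surjective ℝ ID2 w
  change ∃ c a b : ℝ, mkWD2 p = _
  induction p using MvPolynomial.induction_on with
  | C r => exact ⟨r, 0, 0, by rw [← MvPolynomial.algebraMap_eq, AlgHom.commutes]; simp⟩
  | add p q hp hq =>
    obtain ⟨c, a, b, hp⟩ := hp
    obtain ⟨c', a', b', hq⟩ := hq
    exact ⟨c + c', a + a', b + b', by rw [map_add, hp, hq]; simp only [map_add, add_smul]; abel⟩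
  | mul_X p i hp =>
    obtain ⟨c, a, b, hp⟩ := hp
    have key : mkWD2 (p * MvPolynomial.X i) = c • genWD2 i := by
      rw [map_mul, hp, ← genWD2]
      simp [add_mul, mul_assoc, genWD2_mul_genWD2, Algebra.smul_def]
    fin_cases i
    · exact ⟨0, c, 0, by simpa using key⟩
    · exact ⟨0, 0, c, by simpa using key⟩

section Lift

variable {S : Type} [CommRing S] [Algebra ℝ S] (g : Fin 2 → S) (hg : ∀ i j, g i * g j = 0)

def liftWD2 : WD2 →ₐ[ℝ] S :=
  Ideal.Quotient.liftₐ ID2 (MvPolynomial.aeval g) <| by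
    suffices ID2 ≤ RingHom.ker (MvPolynomial.aeval (R := ℝ) g) from fun p hp => this hp
    rw [ID2, Ideal.span_le]
    rintro p (rfl | rfl | rfl) <;> simp [hg]

lemma liftWD2_genWD2 (i : Fin 2) : liftWD2 g hg (genWD2 i) = g i :=
  MvPolynomial.aeval_X g i

end Lift

def toWDTensor : WD2 →ₐ[ℝ] WD ⊗[ℝ] WD :=
  liftWD2 (fun i => xD ⊗ₜ[ℝ] (xD ^ (i : ℕ))) fun _ _ => tmul_mul_tmul_eq_zero xD_mul_self _ _

lemma toWDTensor_genWD2 (i : Fin 2) : toWDTensor (genWD2 i) = xD ⊗ₜ[ℝ] (xD ^ (i : ℕ)) :=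
  liftWD2_genWD2 _ _ i

lemma toWDTensor_apply (c a b : ℝ) :
    toWDTensor (algebraMap ℝ WD2 c + a • genWD2 0 + b • genWD2 1) =
      algebraMap ℝ _ c + a • (xD ⊗ₜ[ℝ] (1 : WD)) + b • (xD ⊗ₜ[ℝ] xD) := by
  rw [map_add, map_add, map_smul, map_smul, AlgHom.commutes, toWDTensor_genWD2,
    toWDTensor_genWD2]
  simp

lemma toWDTensor_injective : Function.Injective toWDTensor := by
  rw [injective_iff_map_eq_zero]
  intro w hw
  obtain ⟨c, a, b, rfl⟩ := WD2_exists_eq w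
  rw [toWDTensor_apply] at hw
  have h := Fintype.linearIndependent_iff.1 linearIndependent_one_xD_tmul ![c, a, b]
    (by simpa [Fin.sum_univ_three, Algebra.algebraMap_eq_smul_one] using hw)
  simp [show c = 0 from h 0, show a = 0 from h 1, show b = 0 from h 2]

lemma range_toWDTensor : toWDTensor.range = redT εD εD := by
  have hx1 : xD ⊗ₜ[ℝ] (1 : WD) ∈ redT εD εD := tmul_mem_redT εD εD εD_xD 1
  have hxx : xD ⊗ₜ[ℝ] xD ∈ redT εD εD := tmul_mem_redT εD εD εD_xD xD
  apply le_antisymm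
  · intro z hz
    obtain ⟨w, rfl⟩ := (AlgHom.mem_range _).1 hz
    obtain ⟨c, a, b, rfl⟩ := WD2_exists_eq w
    rw [toWDTensor_apply]
    exact add_mem (add_mem (algebraMap_mem _ c) (Subalgebra.smul_mem _ hx1 a))
      (Subalgebra.smul_mem _ hxx b)
  · intro z hz
    obtain ⟨c, d, a, b, rfl⟩ := WD_tensor_exists_eq z
    have hd : (1 : WD) ⊗ₜ[ℝ] (d • xD) ∈ redT εD εD := by
      have := sub_mem (sub_mem (sub_mem hz (algebraMap_mem _ c)) (Subalgebra.smul_mem _ hx1 a))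
        (Subalgebra.smul_mem _ hxx b)
      rw [tmul_smul]
      convert this using 1
      abel
    rw [one_tmul_mem_redT_iff] at hd
    obtain rfl : d = 0 := by simpa [xD_ne_zero] using hd
    exact ⟨algebraMap ℝ WD2 c + a • genWD2 0 + b • genWD2 1, by simp [toWDTensor_apply]⟩

/-- `W_{D(2)}` is isomorphic, as an ℝ-algebra, to the reduced tensor product
`W_D ⊗̃ W_D`, i.e. the equalizer subalgebra of `p₁` and `p₀` in `W_D ⊗ W_D`. -/
theorem WD2_iso_reduced_tensor :
    Nonempty (WD2 ≃ₐ[ℝ] (redT εD εD : Subalgebra ℝ (WD ⊗[ℝ] WD))) :=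
  ⟨(AlgEquiv.ofInjective toWDTensor toWDTensor_injective).trans
    (Subalgebra.equivOfEq _ _ range_toWDTensor)⟩

end
end

section
/- Let (W, ε_W), (A, ε_A), (B, ε_B) be augmented commutative ℝ-algebras and let f, g : A → B be ℝ-algebra homomorphisms satisfying ε_B ∘ f = ε_A and ε_B ∘ g = ε_A. Let E = {a ∈ A : f(a) = g(a)} be their equalizer subalgebra, augmented by the restriction of ε_A. Then the image of the subalgebra W ⊗̃ E under the injective ℝ-algebra homomorphism id_W ⊗ (E ↪ A) : W ⊗ E → W ⊗ A equals the intersection of W ⊗̃ A with the equalizer subalgebra {x ∈ W ⊗ A : (id_W ⊗ f)(x) = (id_W ⊗ g)(x)}. (This is the equalizer case of the statement that reduced tensor product with W commutes with finite limits.) -/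
open TensorProduct Polynomial

noncomputable section

/-!
Both projections `p₁, p₀ : W ⊗ A → A` are natural in `A`, so for an injective `h : A → B` the
condition `p₁ = p₀` defining `W ⊗̃ A` can be tested after pushing along `id_W ⊗ h`; hence
`W ⊗̃ E` is the preimage of `W ⊗̃ A` in `W ⊗ E`. Its image is therefore `W ⊗̃ A` intersected with
the range of `id_W ⊗ (E ↪ A)`, and since every `ℝ`-module is flat, that range is the equalizer
of `id_W ⊗ f` and `id_W ⊗ g`.
-/

lemma AlgHom.range_tensorProductMap_equalizer_val {R T A B : Type*} [CommRing R]
    [CommRing T] [Algebra R T] [Module.Flat R T]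
    [CommRing A] [CommRing B] [Algebra R A] [Algebra R B] (f g : A →ₐ[R] B) :
    (Algebra.TensorProduct.map (AlgHom.id R T) (AlgHom.equalizer f g).val).range =
      AlgHom.equalizer (Algebra.TensorProduct.map (AlgHom.id R T) f)
        (Algebra.TensorProduct.map (AlgHom.id R T) g) := by
  ext x
  constructor
  · rintro ⟨y, rfl⟩
    simpa using (AlgHom.tensorEqualizer R T f g y).2
  · intro hx
    refine ⟨(AlgHom.tensorEqualizerEquiv R T f g).symm ⟨x, hx⟩, ?_⟩
    rw [AlgHom.toRingHom_eq_coe, RingHom.coe_coe, ← AlgHom.coe_tensorEqualizer,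
      ← AlgHom.tensorEqualizerEquiv_apply, AlgEquiv.apply_symm_apply]

section Naturality

variable {W A B : Type} [CommRing W] [CommRing A] [CommRing B]
  [Algebra ℝ W] [Algebra ℝ A] [Algebra ℝ B]

lemma p1_comp_map (εW : W →ₐ[ℝ] ℝ) (h : A →ₐ[ℝ] B) :
    (p1 εW).comp (Algebra.TensorProduct.map (AlgHom.id ℝ W) h) = h.comp (p1 εW) := by
  ext x
  · simp [p1, Algebra.ofId_apply]
  · simp [p1]

lemma p0_comp_map (εW : W →ₐ[ℝ] ℝ) (εB : B →ₐ[ℝ] ℝ) (h : A →ₐ[ℝ] B) :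
    (p0 εW εB).comp (Algebra.TensorProduct.map (AlgHom.id ℝ W) h) =
      h.comp (p0 εW (εB.comp h)) := by
  ext x
  · simp [p0, Algebra.ofId_apply]
  · simp [p0, Algebra.ofId_apply]

lemma redT_comp_eq_comap (εW : W →ₐ[ℝ] ℝ) (εB : B →ₐ[ℝ] ℝ) {h : A →ₐ[ℝ] B}
    (hh : Function.Injective h) :
    redT εW (εB.comp h) = (redT εW εB).comap (Algebra.TensorProduct.map (AlgHom.id ℝ W) h) := by
  ext y
  change p1 εW y = p0 εW (εB.comp h) y ↔
    (p1 εW).comp (Algebra.TensorProduct.map (AlgHom.id ℝ W) h) y =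
      (p0 εW εB).comp (Algebra.TensorProduct.map (AlgHom.id ℝ W) h) y
  rw [p1_comp_map, p0_comp_map, AlgHom.comp_apply, AlgHom.comp_apply, hh.eq_iff]

end Naturality

theorem reduced_tensor_preserves_equalizer_general (W A B : Type)
    [CommRing W] [CommRing A] [CommRing B]
    [Algebra ℝ W] [Algebra ℝ A] [Algebra ℝ B]
    (εW : W →ₐ[ℝ] ℝ) (εA : A →ₐ[ℝ] ℝ)
    (f g : A →ₐ[ℝ] B) :
    Subalgebra.map
        (Algebra.TensorProduct.map (AlgHom.id ℝ W) (AlgHom.equalizer f g).val)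
        (redT εW (εA.comp (AlgHom.equalizer f g).val)) =
      redT εW εA ⊓
        AlgHom.equalizer (Algebra.TensorProduct.map (AlgHom.id ℝ W) f)
          (Algebra.TensorProduct.map (AlgHom.id ℝ W) g) := by
  rw [redT_comp_eq_comap εW εA Subtype.val_injective, Subalgebra.map_comap_eq,
    AlgHom.range_tensorProductMap_equalizer_val]

/-- Reduced tensoring with `W` preserves equalizers: the image of `W ⊗̃ E` in `W ⊗ A`
is the intersection of `W ⊗̃ A` with the equalizer of `id_W ⊗ f` and `id_W ⊗ g`. -/
theorem reduced_tensor_preserves_equalizer (W A B : Type)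
    [CommRing W] [CommRing A] [CommRing B]
    [Algebra ℝ W] [Algebra ℝ A] [Algebra ℝ B]
    (εW : W →ₐ[ℝ] ℝ) (εA : A →ₐ[ℝ] ℝ) (εB : B →ₐ[ℝ] ℝ)
    (f g : A →ₐ[ℝ] B) (hf : εB.comp f = εA) (hg : εB.comp g = εA) :
    Subalgebra.map
        (Algebra.TensorProduct.map (AlgHom.id ℝ W) (AlgHom.equalizer f g).val)
        (redT εW (εA.comp (AlgHom.equalizer f g).val)) =
      redT εW εA ⊓
        AlgHom.equalizer (Algebra.TensorProduct.map (AlgHom.id ℝ W) f)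
          (Algebra.TensorProduct.map (AlgHom.id ℝ W) g) :=
  reduced_tensor_preserves_equalizer_general W A B εW εA f g

end
end
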